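/- arXiv:1512.09033 — 3 statements merged into one kernel-verified Lean document; each statement's English description precedes it below -/
import Mathlib

section
/- Let (u_n)_{n≥1} be a sequence of positive integers tending to infinity with n, and let k be a positive integer. Then ∑_{n=1}^∞ (-1)^{u_n − n} · F_{u_{n+2k} − u_n} / (F_{u_n} · F_{u_{n+2k}}) = ∑_{n=1}^{k} (-1)^{u_{2n-1}+1} · F_{u_{2n} − u_{2n-1}} / (F_{u_{2n}} · F_{u_{2n-1}}). -/
open Filter Finset Topology

/-- The Fibonacci sequence extended to all integer indices via
`F_{-n} = (-1)^(n+1) F_n`. -/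
def fibZ (n : ℤ) : ℤ :=
  if 0 ≤ n then (Nat.fib n.toNat : ℤ) else (-1) ^ (n.natAbs + 1) * (Nat.fib n.natAbs : ℤ)

/-!
By d'Ocagne's identity `F_{a-b} = (-1)^b (F_a F_{b+1} - F_{a+1} F_b)`, the quotient
`F_{a-b} / (F_a F_b)` is `(-1)^b (r_b - r_a)` with `r_m = F_{m+1} / F_m`. Hence the `n`-th term of
the series is `x_n - x_{n+2k}` with `x_m = (-1)^{m+1} r_{u_{m+1}}`, and the partial sums telescope
to `∑_{i<2k} x_i - ∑_{i<2k} x_{N+i}`. Up to sign, the second sum is an alternating sum of `2k`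
terms that all tend to the golden ratio, so it tends to `0`; grouping the first in pairs `x_{2n} + x_{2n+1}` gives
the right-hand side.
-/

theorem neg_one_zpow_natCast_sub {K : Type*} [DivisionRing K] (m n : ℕ) :
    (-1 : K) ^ ((m : ℤ) - n) = (-1) ^ (m + n) := by
  rw [zpow_sub₀ (neg_ne_zero.2 one_ne_zero), zpow_natCast, zpow_natCast,
    div_eq_mul_inv, ← inv_pow, inv_neg_one, pow_add]

theorem fibZ_eq_intFib : fibZ = Int.fib := by
  ext n
  obtain ⟨m, rfl | rfl⟩ := n.eq_nat_or_neg
  · simp [fibZ]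
  · simp [fibZ, Int.fib_neg_natCast]

theorem Int.fib_sub_natCast (m : ℤ) (n : ℕ) :
    Int.fib (m - n) = (-1) ^ n * (Int.fib m * Nat.fib (n + 1) - Int.fib (m + 1) * Nat.fib n) := by
  cases n with
  | zero => simp
  | succ n =>
    have hneg : -((n + 1 : ℕ) : ℤ) + 1 = -(n : ℤ) := by push_cast; ring
    have hm := Int.fib_add_two (m - 1)
    rw [sub_eq_add_neg, Int.fib_add, hneg, Int.fib_neg_natCast, Int.fib_neg_natCast,
      Nat.fib_add_two]
    rw [show m - 1 + 2 = m + 1 by ring, sub_add_cancel] at hm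
    push_cast
    rw [hm]
    ring

theorem Int.neg_one_pow_mul_fib_natCast_sub_div (a b : ℕ) (ha : 0 < a) (hb : 0 < b) :
    (-1 : ℝ) ^ b * (Int.fib ((a : ℤ) - b) / (Nat.fib b * Nat.fib a))
      = Nat.fib (b + 1) / Nat.fib b - Nat.fib (a + 1) / Nat.fib a := by
  have hfa : (Nat.fib a : ℝ) ≠ 0 := by positivity [Nat.fib_pos.2 ha]
  have hfb : (Nat.fib b : ℝ) ≠ 0 := by positivity [Nat.fib_pos.2 hb]
  rw [Int.fib_sub_natCast, ← Nat.cast_add_one, Int.fib_natCast, Int.fib_natCast]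
  push_cast
  field_simp
  rw [← pow_mul, pow_mul', neg_one_sq, one_pow, one_mul]

theorem Finset.sum_range_two_mul {M : Type*} [AddCommMonoid M] (f : ℕ → M) (k : ℕ) :
    ∑ i ∈ range (2 * k), f i = ∑ j ∈ range k, (f (2 * j) + f (2 * j + 1)) := by
  induction k with
  | zero => simp
  | succ k ih => rw [mul_add_one, sum_range_succ, sum_range_succ, ih, sum_range_succ, add_assoc]

theorem Finset.sum_range_sub_shift {M : Type*} [AddCommGroup M] (x : ℕ → M) (p N : ℕ) :
    ∑ n ∈ range N, (x n - x (n + p)) = ∑ i ∈ range p, x i - ∑ i ∈ range p, x (N + i) := by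
  induction N with
  | zero => simp
  | succ N ih =>
    have hwindow : x N + ∑ i ∈ range p, x (N + 1 + i) = ∑ i ∈ range p, x (N + i) + x (N + p) := by
      rw [← sum_range_succ, sum_range_succ']
      simp only [add_zero, add_assoc, add_comm 1, add_comm (x N)]
    rw [sum_range_succ, ih, eq_sub_of_add_eq' hwindow]
    abel

theorem tendsto_sum_range_sub_shift {M : Type*} [AddCommGroup M] [TopologicalSpace M]
    [IsTopologicalAddGroup M] {x : ℕ → M} {p : ℕ}
    (h : Tendsto (fun N => ∑ i ∈ range p, x (N + i)) atTop (𝓝 0)) :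
    Tendsto (fun N => ∑ n ∈ range N, (x n - x (n + p))) atTop (𝓝 (∑ i ∈ range p, x i)) := by
  have hlim := (tendsto_const_nhds (x := ∑ i ∈ range p, x i)).sub h
  rw [sub_zero] at hlim
  exact hlim.congr fun N => (sum_range_sub_shift x p N).symm

theorem tendsto_sum_range_two_mul_neg_one_pow_mul {R : Type*} [NormedRing R]
    {g : ℕ → R} {L : R} (hg : Tendsto g atTop (𝓝 L)) (k : ℕ) :
    Tendsto (fun N => ∑ i ∈ range (2 * k), (-1) ^ (N + i) * g (N + i)) atTop (𝓝 0) := by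
  have hwindow : Tendsto (fun N => ∑ i ∈ range (2 * k), (-1) ^ i * g (N + i)) atTop
      (𝓝 (∑ i ∈ range (2 * k), (-1) ^ i * L)) :=
    tendsto_finsetSum _ fun i _ => (hg.comp (tendsto_add_atTop_nat i)).const_mul _
  rw [← sum_mul, neg_one_geom_sum, if_pos (even_two_mul k), zero_mul] at hwindow
  rw [tendsto_zero_iff_norm_tendsto_zero] at hwindow ⊢
  refine hwindow.congr fun N => ?_
  simp only [pow_add, mul_assoc, ← mul_sum]
  rcases neg_one_pow_eq_or R N with h | h <;> simp [h]

theorem statement10_general (u : ℕ → ℕ) (hupos : ∀ n, 1 ≤ n → 1 ≤ u n)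
    (hutend : Tendsto u atTop atTop) (k : ℕ) :
    Tendsto (fun N => ∑ n ∈ Finset.range N,
        (-1 : ℝ) ^ ((u (n + 1) : ℤ) - ((n : ℤ) + 1)) *
          ((fibZ ((u (n + 1 + 2 * k) : ℤ) - (u (n + 1) : ℤ)) : ℝ) /
            ((Nat.fib (u (n + 1)) : ℝ) * (Nat.fib (u (n + 1 + 2 * k)) : ℝ))))
      atTop
      (𝓝 (∑ n ∈ Finset.range k,
        (-1 : ℝ) ^ (u (2 * n + 1) + 1) *
          ((fibZ ((u (2 * n + 2) : ℤ) - (u (2 * n + 1) : ℤ)) : ℝ) /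
            ((Nat.fib (u (2 * n + 2)) : ℝ) * (Nat.fib (u (2 * n + 1)) : ℝ))))) := by
  set r : ℕ → ℝ := fun m => Nat.fib (m + 1) / Nat.fib m
  set x : ℕ → ℝ := fun m => (-1) ^ (m + 1) * r (u (m + 1))
  have htail : Tendsto (fun N => ∑ i ∈ range (2 * k), x (N + i)) atTop (𝓝 0) := by
    have hr : Tendsto (fun m => r (u (m + 1))) atTop (𝓝 Real.goldenRatio) :=
      tendsto_fib_succ_div_fib_atTop.comp (hutend.comp (tendsto_add_atTop_nat 1))
    simpa [x, pow_succ] using (tendsto_sum_range_two_mul_neg_one_pow_mul hr k).neg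
  convert tendsto_sum_range_sub_shift htail using 2
  · refine sum_congr rfl fun n _ => ?_
    rw [fibZ_eq_intFib, ← Nat.cast_add_one, neg_one_zpow_natCast_sub, pow_add, mul_right_comm,
      Int.neg_one_pow_mul_fib_natCast_sub_div _ _ (hupos _ (by omega)) (hupos _ (by omega))]
    simp only [x, r, add_right_comm n (2 * k), pow_add _ (n + 1), pow_mul, neg_one_sq, one_pow]
    ring
  · rw [sum_range_two_mul]
    refine sum_congr rfl fun n _ => ?_
    rw [fibZ_eq_intFib, mul_comm (Nat.fib _ : ℝ), pow_succ, mul_right_comm,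
      Int.neg_one_pow_mul_fib_natCast_sub_div _ _ (hupos _ (by omega)) (hupos _ (by omega))]
    simp only [x, r, pow_succ, pow_mul]
    ring

/-- Let `(u_n)_{n≥1}` be a sequence of positive integers tending to
infinity and `k ≥ 1`. Then
`∑_{n=1}^∞ (-1)^{u_n - n} F_{u_{n+2k} - u_n} / (F_{u_n} F_{u_{n+2k}})
= ∑_{n=1}^k (-1)^{u_{2n-1}+1} F_{u_{2n} - u_{2n-1}} / (F_{u_{2n}} F_{u_{2n-1}})`. -/
theorem statement10 (u : ℕ → ℕ) (hupos : ∀ n, 1 ≤ n → 1 ≤ u n)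
    (hutend : Tendsto u atTop atTop) (k : ℕ) (hk : 1 ≤ k) :
    Tendsto (fun N => ∑ n ∈ Finset.range N,
        (-1 : ℝ) ^ ((u (n + 1) : ℤ) - ((n : ℤ) + 1)) *
          ((fibZ ((u (n + 1 + 2 * k) : ℤ) - (u (n + 1) : ℤ)) : ℝ) /
            ((Nat.fib (u (n + 1)) : ℝ) * (Nat.fib (u (n + 1 + 2 * k)) : ℝ))))
      atTop
      (𝓝 (∑ n ∈ Finset.range k,
        (-1 : ℝ) ^ (u (2 * n + 1) + 1) *
          ((fibZ ((u (2 * n + 2) : ℤ) - (u (2 * n + 1) : ℤ)) : ℝ) /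
            ((Nat.fib (u (2 * n + 2)) : ℝ) * (Nat.fib (u (2 * n + 1)) : ℝ))))) :=
  statement10_general u hupos hutend k
end

section
/- Let (u_n)_{n≥1} be an increasing arithmetic sequence of positive integers with common difference r ≥ 1. Then ∑_{n=1}^∞ (-1)^{(r-1)(n-1)} / (F_{u_n} · F_{u_{n+2}}) = 1 / (F_{u_1} · F_{u_2} · L_r). -/
open Filter Finset Topology

/-- The Lucas sequence: `L_0 = 2`, `L_1 = 1`, `L_{n+2} = L_n + L_{n+1}`. -/
def lucas : ℕ → ℕ
  | 0 => 2
  | 1 => 1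
  | n + 2 => lucas n + lucas (n + 1)

/-! The identity `L_r F_{m+r} = F_{m+2r} + (-1)^r F_m` makes the series telescope:
`(-1)^{(r-1)n} / (F_{u_n} F_{u_{n+2}}) = c_n - c_{n+1}` with
`c_n = (-1)^{(r-1)n} / (F_{u_n} F_{u_{n+1}} L_r)`. The terms `c_n` tend to `0`, and the series
converges absolutely, since Fibonacci numbers grow like powers of the golden ratio. -/

lemma lucas_pos (n : ℕ) : 0 < lucas n := by
  induction n using Nat.twoStepInduction with
  | zero => decide
  | one => decide
  | more n ih₀ ih₁ => exact Nat.add_pos_left ih₀ _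

lemma lucas_mul_fib_add {R : Type*} [CommRing R] (r m : ℕ) :
    (lucas r : R) * Nat.fib (m + r) = Nat.fib (m + 2 * r) + (-1) ^ r * Nat.fib m := by
  induction r using Nat.twoStepInduction generalizing m with
  | zero => simp [lucas]; ring
  | one => simp [lucas, Nat.fib_add_two]
  | more r ih₀ ih₁ =>
    have h₀ := ih₀ (m + 2)
    have h₁ := ih₁ (m + 1)
    have e₀ : Nat.fib (m + 2 * (r + 2)) =
        Nat.fib (m + 2 + 2 * r) + Nat.fib (m + 1 + 2 * (r + 1)) := by
      rw [show m + 2 * (r + 2) = (m + 2 + 2 * r) + 2 by ring, Nat.fib_add_two]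
      ring_nf
    have e₁ : Nat.fib (m + 2) = Nat.fib m + Nat.fib (m + 1) := Nat.fib_add_two
    rw [show m + 2 + r = m + (r + 2) by ring] at h₀
    rw [show m + 1 + (r + 1) = m + (r + 2) by ring] at h₁
    simp only [lucas, e₀, e₁, Nat.cast_add] at h₀ ⊢
    linear_combination h₀ + h₁

lemma one_div_fib_mul_fib_add_two_mul {m : ℕ} (hm : 0 < m) (r : ℕ) :
    1 / ((Nat.fib m : ℝ) * Nat.fib (m + 2 * r)) =
      1 / (Nat.fib m * Nat.fib (m + r) * lucas r) +
        (-1) ^ r / (Nat.fib (m + r) * Nat.fib (m + 2 * r) * lucas r) := by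
  have : (0 : ℝ) < Nat.fib m := by exact_mod_cast Nat.fib_pos.2 hm
  have : (0 : ℝ) < Nat.fib (m + r) := by exact_mod_cast Nat.fib_pos.2 (by omega)
  have : (0 : ℝ) < Nat.fib (m + 2 * r) := by exact_mod_cast Nat.fib_pos.2 (by omega)
  have : (0 : ℝ) < lucas r := by exact_mod_cast lucas_pos r
  field_simp
  linear_combination lucas_mul_fib_add (R := ℝ) r m

lemma inv_fib_add_one_le (n : ℕ) :
    ((Nat.fib (n + 1) : ℝ))⁻¹ ≤ 2 * Real.goldenRatio⁻¹ ^ n := by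
  have hφ : Real.goldenRatio ^ n ≤ 2 * Nat.fib (n + 1) := by
    have := Real.fib_succ_sub_goldenConj_mul_fib n
    have : (Nat.fib n : ℝ) ≤ Nat.fib (n + 1) := by exact_mod_cast Nat.fib_le_fib_succ
    nlinarith [Real.neg_one_lt_goldenConj, Real.goldenConj_neg, (Nat.fib n).cast_nonneg (α := ℝ)]
  rw [inv_pow, ← div_eq_mul_inv, ← inv_div]
  exact inv_anti₀ (by positivity) (by linarith)

lemma summable_inv_fib : Summable fun n => ((Nat.fib n : ℝ))⁻¹ := by
  rw [← summable_nat_add_iff 1]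
  refine .of_nonneg_of_le (fun n => by positivity) inv_fib_add_one_le ?_
  exact (summable_geometric_of_lt_one (by positivity)
    (inv_lt_one_of_one_lt₀ Real.one_lt_goldenRatio)).mul_left 2

lemma hasSum_sub_succ {G : Type*} [AddCommGroup G] [TopologicalSpace G] [IsTopologicalAddGroup G]
    [T2Space G] {c : ℕ → G} (hs : Summable fun n => c n - c (n + 1))
    (hc : Tendsto c atTop (𝓝 0)) : HasSum (fun n => c n - c (n + 1)) (c 0) := by
  rw [hs.hasSum_iff_tendsto_nat]
  simp_rw [Finset.sum_range_sub']
  simpa using tendsto_const_nhds.sub hc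

lemma norm_neg_one_pow_div_mul_le {x y : ℝ} (k : ℕ) (hx : 0 < x) (hy : 1 ≤ y) :
    ‖(-1 : ℝ) ^ k / (x * y)‖ ≤ x⁻¹ := by
  rw [norm_div, norm_pow, norm_neg, norm_one, one_pow, Real.norm_of_nonneg (by positivity),
    one_div, mul_inv]
  exact mul_le_of_le_one_right (inv_nonneg.2 hx.le) (inv_le_one_of_one_le₀ hy)

lemma fib_add_one_le_fib_add_mul {a r : ℕ} (ha : 1 ≤ a) (hr : 1 ≤ r) (n : ℕ) :
    Nat.fib (n + 1) ≤ Nat.fib (a + n * r) :=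
  Nat.fib_mono (by nlinarith)

theorem hasSum_neg_one_pow_div_fib_mul_fib {a r : ℕ} (ha : 1 ≤ a) (hr : 1 ≤ r) :
    HasSum (fun n : ℕ => (-1 : ℝ) ^ ((r - 1) * n) /
        (Nat.fib (a + n * r) * Nat.fib (a + (n + 2) * r)))
      (1 / (Nat.fib a * Nat.fib (a + r) * lucas r)) := by
  obtain ⟨s, rfl⟩ : ∃ s, r = s + 1 := ⟨r - 1, by omega⟩
  rw [Nat.add_sub_cancel]
  set v : ℕ → ℕ := fun n => a + n * (s + 1) with hv
  have hv_succ (n : ℕ) : v (n + 1) = v n + (s + 1) := by simp only [hv]; ring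
  have hfib_ge (n : ℕ) : (Nat.fib (n + 1) : ℝ) ≤ Nat.fib (v n) := by
    exact_mod_cast fib_add_one_le_fib_add_mul ha hr n
  have hfib_pos (n : ℕ) : (0 : ℝ) < Nat.fib (n + 1) := by
    exact_mod_cast Nat.fib_pos.2 n.succ_pos
  have hfib_one (n : ℕ) : (1 : ℝ) ≤ Nat.fib (v n) :=
    le_trans (by exact_mod_cast Nat.fib_pos.2 n.succ_pos) (hfib_ge n)
  have hlucas : (1 : ℝ) ≤ lucas (s + 1) := by exact_mod_cast lucas_pos (s + 1)
  set c : ℕ → ℝ := fun n =>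
    (-1) ^ (s * n) / (Nat.fib (v n) * Nat.fib (v (n + 1)) * lucas (s + 1))
  have hstep (n : ℕ) :
      (-1 : ℝ) ^ (s * n) / (Nat.fib (v n) * Nat.fib (v (n + 2))) = c n - c (n + 1) := by
    have h := one_div_fib_mul_fib_add_two_mul (m := v n) (by simp only [hv]; omega) (s + 1)
    rw [← hv_succ, two_mul, ← add_assoc, ← hv_succ, ← hv_succ] at h
    simp only [c, mul_add, mul_one, pow_add]
    rw [div_eq_mul_one_div, h]
    ring
  have hbound (n : ℕ) : ‖(-1 : ℝ) ^ (s * n) / (Nat.fib (v n) * Nat.fib (v (n + 2)))‖ ≤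
      (Nat.fib (n + 1) : ℝ)⁻¹ :=
    (norm_neg_one_pow_div_mul_le _ (by linarith [hfib_one n]) (hfib_one _)).trans
      (inv_anti₀ (hfib_pos n) (hfib_ge n))
  have hc_bound (n : ℕ) : ‖c n‖ ≤ (Nat.fib (n + 1) : ℝ)⁻¹ := by
    refine le_trans ?_ (inv_anti₀ (hfib_pos n) (hfib_ge n))
    simp only [c, mul_assoc]
    exact norm_neg_one_pow_div_mul_le _ (by linarith [hfib_one n])
      (one_le_mul_of_one_le_of_one_le (hfib_one _) hlucas)
  have hsummable : Summable fun n => (Nat.fib (n + 1) : ℝ)⁻¹ :=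
    (summable_nat_add_iff 1).2 summable_inv_fib
  have hc : Tendsto c atTop (𝓝 0) := squeeze_zero_norm hc_bound hsummable.tendsto_atTop_zero
  have hc₀ : c 0 = 1 / (Nat.fib a * Nat.fib (a + (s + 1)) * lucas (s + 1)) := by simp [c, hv]
  simpa only [← hstep, hc₀] using
    hasSum_sub_succ (funext hstep ▸ hsummable.of_norm_bounded hbound) hc

/-- Let `(u_n)_{n≥1}` be an increasing arithmetic sequence of positive
integers with common difference `r ≥ 1`. Then
`∑_{n=1}^∞ (-1)^{(r-1)(n-1)} / (F_{u_n} F_{u_{n+2}}) = 1 / (F_{u_1} F_{u_2} L_r)`. -/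
theorem statement13 (u : ℕ → ℕ) (r : ℕ) (hr : 1 ≤ r) (hu1 : 1 ≤ u 1)
    (harith : ∀ n, 1 ≤ n → u (n + 1) = u n + r) :
    ∑' n : ℕ, (-1 : ℝ) ^ ((r - 1) * n) /
        ((Nat.fib (u (n + 1)) : ℝ) * (Nat.fib (u (n + 3)) : ℝ)) =
      1 / ((Nat.fib (u 1) : ℝ) * (Nat.fib (u 2) : ℝ) * (lucas r : ℝ)) := by
  have hu : ∀ n, u (n + 1) = u 1 + n * r := by
    intro n
    induction n with
    | zero => simp
    | succ n ih => rw [harith (n + 1) (by omega), ih]; ring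
  have hu₂ : u 2 = u 1 + r := by simpa using hu 1
  have hu₃ (n : ℕ) : u (n + 3) = u 1 + (n + 2) * r := hu (n + 2)
  rw [hu₂, ← (hasSum_neg_one_pow_div_fib_mul_fib hu1 hr).tsum_eq]
  exact tsum_congr fun n => by rw [hu n, hu₃ n]
end

section
/- ∑_{n=1}^∞ |√5 − L_{3n}/F_{3n}| = 2 · ∑_{n=1}^∞ 1/(F_{3n} · Φ^{3n}) = 4 · ∑_{n=1}^∞ 1/(F_{6n} · F_{6n-3}). -/
open Filter Finset Topology

/-- The golden ratio `Φ = (1 + √5)/2`. -/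
noncomputable def Phi : ℝ := (1 + Real.sqrt 5) / 2

/-!
By Binet, `L_m = φ^m + ψ^m` and `√5 F_m = φ^m - ψ^m` with `ψ = -φ⁻¹`, so
`√5 - L_m / F_m = -2 ψ^m / F_m`, whose absolute value is `2 / (F_m φ^m)`. For the second
equality, group the terms `m = 6k+3` and `m = 6k+6` of `∑ 1 / (F_m φ^m)`: writing
`1 / (F_m φ^m) = (-ψ)^m / F_m`, the identity `ψ^a F_{a+k} - ψ^{a+k} F_a = (-1)^a F_k`
turns each pair into `F_3 / (F_{6k+3} F_{6k+6}) = 2 / (F_{6k+3} F_{6k+6})`.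
-/

open Real goldenRatio

lemma Phi_eq_goldenRatio : Phi = φ := rfl

lemma cast_lucas_eq : ∀ n : ℕ, (lucas n : ℝ) = φ ^ n + ψ ^ n
  | 0 => by norm_num [lucas]
  | 1 => by simp [lucas]
  | n + 2 => by
      have hφ : φ ^ (n + 2) = φ ^ n + φ ^ (n + 1) := by
        rw [pow_succ, pow_succ, mul_assoc, ← sq, goldenRatio_sq]; ring
      have hψ : ψ ^ (n + 2) = ψ ^ n + ψ ^ (n + 1) := by
        rw [pow_succ, pow_succ, mul_assoc, ← sq, goldenConj_sq]; ring
      rw [lucas, Nat.cast_add, cast_lucas_eq n, cast_lucas_eq (n + 1), hφ, hψ]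
      ring

lemma sqrt_five_mul_fib (n : ℕ) : √5 * Nat.fib n = φ ^ n - ψ ^ n := by
  rw [coe_fib_eq]
  field_simp

lemma cast_fib_pos {n : ℕ} (hn : 0 < n) : (0 : ℝ) < Nat.fib n := by
  exact_mod_cast Nat.fib_pos.mpr hn

lemma sqrt_five_sub_lucas_div_fib {n : ℕ} (hn : 0 < n) :
    √5 - (lucas n : ℝ) / Nat.fib n = -2 * ψ ^ n / Nat.fib n := by
  have hF := (cast_fib_pos hn).ne'
  rw [eq_div_iff hF, sub_mul, div_mul_cancel₀ _ hF, sqrt_five_mul_fib, cast_lucas_eq]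
  ring

lemma one_div_fib_mul_goldenRatio_pow (n : ℕ) :
    1 / ((Nat.fib n : ℝ) * φ ^ n) = (-ψ) ^ n / Nat.fib n := by
  rw [← inv_goldenRatio, inv_pow, one_div, mul_inv, div_eq_mul_inv, mul_comm]

lemma abs_sqrt_five_sub_lucas_div_fib {n : ℕ} (hn : 0 < n) :
    |√5 - (lucas n : ℝ) / Nat.fib n| = 2 * (1 / ((Nat.fib n : ℝ) * φ ^ n)) := by
  rw [sqrt_five_sub_lucas_div_fib hn, one_div_fib_mul_goldenRatio_pow, abs_div,
    abs_of_pos (cast_fib_pos hn), abs_mul, abs_pow, abs_of_neg goldenConj_neg, abs_neg,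
    abs_two]
  ring

lemma goldenConj_pow_mul_fib_add_sub (a k : ℕ) :
    ψ ^ a * Nat.fib (a + k) - ψ ^ (a + k) * Nat.fib a = (-1) ^ a * Nat.fib k := by
  have h5 : √5 ≠ 0 := by positivity
  apply mul_left_cancel₀ h5
  have hφψ : φ ^ a * ψ ^ a = (-1) ^ a := by rw [← mul_pow, goldenRatio_mul_goldenConj]
  linear_combination ψ ^ a * sqrt_five_mul_fib (a + k) - ψ ^ (a + k) * sqrt_five_mul_fib a
    - (-1) ^ a * sqrt_five_mul_fib k + (φ ^ k - ψ ^ k) * hφψ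

lemma one_div_fib_mul_goldenRatio_pow_add {a k : ℕ} (ha : 0 < a) (hk : Odd k) :
    1 / ((Nat.fib a : ℝ) * φ ^ a) + 1 / ((Nat.fib (a + k) : ℝ) * φ ^ (a + k)) =
      Nat.fib k / ((Nat.fib a : ℝ) * Nat.fib (a + k)) := by
  have hFa := (cast_fib_pos ha).ne'
  have hFak := (cast_fib_pos (n := a + k) (by omega)).ne'
  have hsign : ((-1) ^ a) ^ 2 = (1 : ℝ) := by rw [← pow_mul, mul_comm, pow_mul]; norm_num
  rw [one_div_fib_mul_goldenRatio_pow, one_div_fib_mul_goldenRatio_pow, neg_pow ψ, neg_pow ψ,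
    pow_add (-1 : ℝ), hk.neg_one_pow]
  field_simp
  linear_combination (-1) ^ a * goldenConj_pow_mul_fib_add_sub a k + Nat.fib k * hsign

lemma summable_one_div_fib_mul_goldenRatio_pow :
    Summable fun n : ℕ => 1 / ((Nat.fib n : ℝ) * φ ^ n) := by
  refine Summable.of_nonneg_of_le (fun n => by positivity) (fun n => ?_)
    (summable_geometric_of_lt_one (inv_pos.mpr goldenRatio_pos).le
      (inv_lt_one_of_one_lt₀ one_lt_goldenRatio))
  rw [one_div, mul_inv, inv_pow]
  exact mul_le_of_le_one_left (by positivity) (Nat.cast_inv_le_one _)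

lemma tsum_eq_tsum_add_pairs {E : Type*} [NormedAddCommGroup E] [CompleteSpace E]
    {f : ℕ → E} (hf : Summable f) : ∑' n, f n = ∑' k, (f (2 * k) + f (2 * k + 1)) := by
  have he : Summable fun k => f (2 * k) := hf.comp_injective fun a b h => by omega
  have ho : Summable fun k => f (2 * k + 1) := hf.comp_injective fun a b h => by omega
  rw [← tsum_even_add_odd he ho, he.tsum_add ho]

/-- `∑_{n=1}^∞ |√5 - L_{3n}/F_{3n}| = 2 ∑_{n=1}^∞ 1/(F_{3n} Φ^{3n})
= 4 ∑_{n=1}^∞ 1/(F_{6n} F_{6n-3})`. -/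
theorem statement18 :
    (∑' n : ℕ, |Real.sqrt 5 - (lucas (3 * (n + 1)) : ℝ) / (Nat.fib (3 * (n + 1)) : ℝ)| =
      2 * ∑' n : ℕ, 1 / ((Nat.fib (3 * (n + 1)) : ℝ) * Phi ^ (3 * (n + 1)))) ∧
    (2 * ∑' n : ℕ, 1 / ((Nat.fib (3 * (n + 1)) : ℝ) * Phi ^ (3 * (n + 1))) =
      4 * ∑' n : ℕ, 1 / ((Nat.fib (6 * (n + 1)) : ℝ) * (Nat.fib (6 * (n + 1) - 3) : ℝ))) := by
  simp only [Phi_eq_goldenRatio]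
  constructor
  · rw [← tsum_mul_left]
    exact tsum_congr fun n => abs_sqrt_five_sub_lucas_div_fib (by omega)
  · have hsum : Summable fun n : ℕ => 1 / ((Nat.fib (3 * (n + 1)) : ℝ) * φ ^ (3 * (n + 1))) :=
      summable_one_div_fib_mul_goldenRatio_pow.comp_injective fun a b h => by omega
    have hpair (k : ℕ) :
        1 / ((Nat.fib (3 * (2 * k + 1)) : ℝ) * φ ^ (3 * (2 * k + 1))) +
          1 / ((Nat.fib (3 * (2 * k + 1 + 1)) : ℝ) * φ ^ (3 * (2 * k + 1 + 1))) =
        2 * (1 / ((Nat.fib (6 * (k + 1)) : ℝ) * Nat.fib (6 * (k + 1) - 3))) := by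
      rw [show 3 * (2 * k + 1 + 1) = 3 * (2 * k + 1) + 3 by ring,
        one_div_fib_mul_goldenRatio_pow_add (by omega) (by decide),
        show 6 * (k + 1) - 3 = 3 * (2 * k + 1) by omega,
        show 6 * (k + 1) = 3 * (2 * k + 1) + 3 by ring, show Nat.fib 3 = 2 from rfl]
      push_cast
      ring
    rw [tsum_eq_tsum_add_pairs hsum, tsum_congr hpair, tsum_mul_left]
    ring
end
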